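/- For every μ > 0, γ ∈ ℝ and n, m ∈ ℕ, the Specialized Chihara polynomials satisfy the orthogonality relation ∫_{F(γ)} P_n(λ;μ,γ) P_m(λ;μ,γ) w(λ;μ,γ) dλ = 2Γ(μ+1/2) δ_{n,m}, where F(γ) = (−∞,−|γ|) ∪ (|γ|,∞). -/

import Mathlib

/-!
Put `u = (x² - γ²)/2`. When `n` and `m` have the same parity, `P_n P_m w` has the form
`sign x · (x + c) · G(u)`, where `G` is a product of two normalized Laguerre polynomials
against `u^α e^{-u}`: for even indices `c = γ` and `α = μ - 1/2`; for odd ones the factor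
`(x - γ)²` of `P_n P_m` combines with `x + γ` into `2u (x - γ)`, so `c = -γ` and `α = μ + 1/2`.
The contributions of `x` and `-x` add up to `2x G(u)`, and `x dx = du`, so the integral over
`F(γ)` is `2 ∫₀^∞ G`, which Laguerre orthogonality evaluates. When the parities differ the
integrand is odd and `F(γ)` is symmetric.

Laguerre orthogonality reduces to the moments
`∫₀^∞ L_n^{(α)}(u) u^{α+j} e^{-u} du = Γ(α+1) (α+1)_n / n! · ∑_k (-1)^k C(n,k) (α+1+k)_j`;
the sum is, up to the sign `(-1)^n`, the `n`-th forward difference of a polynomial of degree `j`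
in `k`, so it vanishes for `j < n` and equals `(-1)^n n!` for `j = n`.
-/

noncomputable section

open Real MeasureTheory

namespace MinusOne

/-- The μ-number `[n]_μ = n + (1 - (-1)^n) μ`. -/
def munum (μ : ℝ) (n : ℕ) : ℝ := n + (1 - (-1 : ℝ) ^ n) * μ

/-- The μ-factorial `[n]_μ! = [1]_μ [2]_μ ⋯ [n]_μ`. -/
def mufact (μ : ℝ) (n : ℕ) : ℝ := ∏ k ∈ Finset.range n, munum μ (k + 1)

/-- Pochhammer symbol `(a)_k = a (a+1) ⋯ (a+k-1)`. -/
def poch (a : ℝ) (k : ℕ) : ℝ := ∏ i ∈ Finset.range k, (a + i)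

/-- Laguerre polynomial `L_n^{(α)}(x)`. -/
def laguerre (α : ℝ) (n : ℕ) (x : ℝ) : ℝ :=
  (poch (α + 1) n / (Nat.factorial n : ℝ)) *
    ∑ k ∈ Finset.range (n + 1),
      poch (-(n : ℝ)) k / (poch (α + 1) k * (Nat.factorial k : ℝ)) * x ^ k

/-- Specialized Chihara polynomials `P_n(x; μ, γ)`. -/
def P (μ γ : ℝ) (n : ℕ) (x : ℝ) : ℝ :=
  if n % 2 = 0 then
    (-1 : ℝ) ^ (n / 2) *
      Real.sqrt ((Nat.factorial (n / 2) : ℝ) * Real.Gamma (μ + 1/2) /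
        Real.Gamma (((n / 2 : ℕ) : ℝ) + μ + 1/2)) *
      laguerre (μ - 1/2) (n / 2) ((x ^ 2 - γ ^ 2) / 2)
  else
    (-1 : ℝ) ^ (n / 2) *
      Real.sqrt ((Nat.factorial (n / 2) : ℝ) * Real.Gamma (μ + 3/2) /
        Real.Gamma (((n / 2 : ℕ) : ℝ) + μ + 3/2)) *
      ((x - γ) / Real.sqrt (2 * μ + 1)) *
      laguerre (μ + 1/2) (n / 2) ((x ^ 2 - γ ^ 2) / 2)

/-- Chihara weight function `w(x; μ, γ)`. -/
def w (μ γ : ℝ) (x : ℝ) : ℝ :=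
  Real.sign x * (x + γ) * ((x ^ 2 - γ ^ 2) / 2) ^ (μ - 1/2) *
    Real.exp (-((x ^ 2 - γ ^ 2) / 2))

/-- The set `F(γ) = (-∞, -|γ|) ∪ (|γ|, ∞)`. -/
def Fset (γ : ℝ) : Set ℝ := Set.Iio (-|γ|) ∪ Set.Ioi (|γ|)

/-- Normalized Chihara weight `W = w / (2 Γ(μ+1/2))`. -/
def Wn (μ γ : ℝ) (x : ℝ) : ℝ := w μ γ x / (2 * Real.Gamma (μ + 1/2))

/-- The measure `W(x; μ, γ) dx` on `F(γ)`. -/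
def meas1 (μ γ : ℝ) : Measure ℝ :=
  (volume.restrict (Fset γ)).withDensity fun x => ENNReal.ofReal (Wn μ γ x)

/-- The region `G = {|λ2| > |λ1| > |c|}`. -/
def Gset (c : ℝ) : Set (ℝ × ℝ) := {p : ℝ × ℝ | |c| < |p.1| ∧ |p.1| < |p.2|}

/-- The measure `W(λ1; μ1, c ε1) W(λ2; μ2, λ1 ε2) dλ1 dλ2` on `G`. -/
def meas2 (μ1 μ2 c ε1 ε2 : ℝ) : Measure (ℝ × ℝ) :=
  ((volume : Measure (ℝ × ℝ)).restrict (Gset c)).withDensity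
    fun p => ENNReal.ofReal (Wn μ1 (c * ε1) p.1 * Wn μ2 (p.1 * ε2) p.2)

/-- The region `G⁽³⁾ = {|λ3| > |λ2| > |λ1| > |c|}`. -/
def G3set (c : ℝ) : Set (ℝ × ℝ × ℝ) :=
  {p : ℝ × ℝ × ℝ | |c| < |p.1| ∧ |p.1| < |p.2.1| ∧ |p.2.1| < |p.2.2|}

/-- The three-variable measure on `G⁽³⁾`. -/
def meas3 (μ1 μ2 μ3 c ε1 ε2 ε3 : ℝ) : Measure (ℝ × ℝ × ℝ) :=
  ((volume : Measure (ℝ × ℝ × ℝ)).restrict (G3set c)).withDensity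
    fun p => ENNReal.ofReal
      (Wn μ1 (c * ε1) p.1 * Wn μ2 (p.1 * ε2) p.2.1 * Wn μ3 (p.2.1 * ε3) p.2.2)

/-- Big −1 Jacobi polynomials `J_n(x; a, b, c)`. -/
def J (a b c : ℝ) (n : ℕ) (x : ℝ) : ℝ :=
  if n % 2 = 0 then
    (∑ k ∈ Finset.range (n + 1),
       poch (-(n : ℝ) / 2) k * poch (((n : ℝ) + a + b + 2) / 2) k /
         (poch ((a + 1) / 2) k * (Nat.factorial k : ℝ)) * ((1 - x ^ 2) / (1 - c ^ 2)) ^ k)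
    + ((n : ℝ) * (1 - x) / ((1 + c) * (a + 1))) *
      ∑ k ∈ Finset.range (n + 1),
        poch (1 - (n : ℝ) / 2) k * poch (((n : ℝ) + a + b + 2) / 2) k /
          (poch ((a + 3) / 2) k * (Nat.factorial k : ℝ)) * ((1 - x ^ 2) / (1 - c ^ 2)) ^ k
  else
    (∑ k ∈ Finset.range (n + 1),
       poch (-((n : ℝ) - 1) / 2) k * poch (((n : ℝ) + a + b + 1) / 2) k /
         (poch ((a + 1) / 2) k * (Nat.factorial k : ℝ)) * ((1 - x ^ 2) / (1 - c ^ 2)) ^ k)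
    - (((n : ℝ) + a + b + 1) * (1 - x) / ((1 + c) * (a + 1))) *
      ∑ k ∈ Finset.range (n + 1),
        poch (-((n : ℝ) - 1) / 2) k * poch (((n : ℝ) + a + b + 3) / 2) k /
          (poch ((a + 3) / 2) k * (Nat.factorial k : ℝ)) * ((1 - x ^ 2) / (1 - c ^ 2)) ^ k

/-- Recurrence coefficient `A_n` for the Big −1 Jacobi polynomials. -/
def JA (a b c : ℝ) (n : ℕ) : ℝ :=
  if n % 2 = 0 then ((n : ℝ) + a + 1) * (c + 1) / (2 * n + a + b + 2)
  else (1 - c) * ((n : ℝ) + a + b + 1) / (2 * n + a + b + 2)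

/-- Recurrence coefficient `C_n` for the Big −1 Jacobi polynomials. -/
def JC (a b c : ℝ) (n : ℕ) : ℝ :=
  if n % 2 = 0 then (n : ℝ) * (1 - c) / (2 * n + a + b)
  else ((n : ℝ) + b) * (1 + c) / (2 * n + a + b)

/-- Big −1 Jacobi weight `ω(x; a, b, c)`. -/
def Jweight (a b c : ℝ) (x : ℝ) : ℝ :=
  Real.sign x * (1 + x) * (x - c) * (x ^ 2 - c ^ 2) ^ ((b - 1) / 2) *
    (1 - x ^ 2) ^ ((a - 1) / 2)

/-- Big −1 Jacobi normalization `h_n(a, b)`. -/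
def hJ (a b : ℝ) (n : ℕ) : ℝ :=
  if n % 2 = 0 then
    2 * Real.Gamma (((n : ℝ) + b + 1) / 2) * Real.Gamma (((n : ℝ) + a + 3) / 2) *
      (Nat.factorial (n / 2) : ℝ) /
      (((n : ℝ) + a + 1) * Real.Gamma (((n : ℝ) + a + b + 2) / 2) * (poch ((a + 1) / 2) (n / 2)) ^ 2)
  else
    ((n : ℝ) + a + b + 1) * Real.Gamma (((n : ℝ) + b + 2) / 2) * Real.Gamma (((n : ℝ) + a + 2) / 2) *
      (Nat.factorial ((n - 1) / 2) : ℝ) /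
      (2 * Real.Gamma (((n : ℝ) + a + b + 3) / 2) * (poch ((a + 1) / 2) ((n + 1) / 2)) ^ 2)

/-- Coupling factor `K_j(y; ν2, ν1; t, σ)`. -/
def K (ν2 ν1 t σ : ℝ) (j : ℕ) (y : ℝ) : ℝ :=
  Real.sqrt (((y ^ 2 - t ^ 2) / 2) ^ j * ((y - t * σ) / (y - (-1 : ℝ) ^ j * t * σ)) *
    Real.Gamma (ν1 + 1/2) * Real.Gamma (ν2 + 1/2) /
    (Real.Gamma (ν1 + ν2 + j + 1) * hJ (2 * ν2) (2 * ν1) j))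

/-- Dual −1 Hahn polynomials `R_n(x; η, ξ, N)`. -/
def Rdual (η ξ : ℝ) (N : ℕ) (n : ℕ) (x : ℝ) : ℝ :=
  if N % 2 = 0 then
    if n % 2 = 0 then
      (16 : ℝ) ^ (n / 2) * poch (-(N : ℝ) / 2) (n / 2) * poch ((1 - 2 * η - N) / 2) (n / 2) *
        ∑ k ∈ Finset.range (n / 2 + 1),
          poch (-((n : ℝ) / 2)) k * poch (-(η + ξ + N) / 2 + (x + 1) / 4) k *
            poch (-(η + ξ + N) / 2 - (x + 1) / 4) k /
            (poch (-(N : ℝ) / 2) k * poch ((1 - 2 * η - N) / 2) k * (Nat.factorial k : ℝ))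
    else
      (16 : ℝ) ^ (n / 2) * poch (1 - (N : ℝ) / 2) (n / 2) * poch ((1 - 2 * η - N) / 2) (n / 2) *
        (x + 2 * η + 2 * ξ + 1) *
        ∑ k ∈ Finset.range (n / 2 + 1),
          poch (-(((n : ℝ) - 1) / 2)) k * poch (-(η + ξ + N) / 2 + (x + 1) / 4) k *
            poch (-(η + ξ + N) / 2 - (x + 1) / 4) k /
            (poch (1 - (N : ℝ) / 2) k * poch ((1 - 2 * η - N) / 2) k * (Nat.factorial k : ℝ))
  else
    if n % 2 = 0 then
      (16 : ℝ) ^ (n / 2) * poch ((1 - (N : ℝ)) / 2) (n / 2) * poch ((2 * ξ + 1) / 2) (n / 2) *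
        ∑ k ∈ Finset.range (n / 2 + 1),
          poch (-((n : ℝ) / 2)) k * poch ((η + ξ + 1) / 2 + (x + 1) / 4) k *
            poch ((η + ξ + 1) / 2 - (x + 1) / 4) k /
            (poch ((1 - (N : ℝ)) / 2) k * poch ((2 * ξ + 1) / 2) k * (Nat.factorial k : ℝ))
    else
      (16 : ℝ) ^ (n / 2) * poch ((1 - (N : ℝ)) / 2) (n / 2) * poch ((2 * ξ + 3) / 2) (n / 2) *
        (x + 2 * ξ - 2 * η + 1) *
        ∑ k ∈ Finset.range (n / 2 + 1),
          poch (-(((n : ℝ) - 1) / 2)) k * poch ((η + ξ + 1) / 2 + (x + 1) / 4) k *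
            poch ((η + ξ + 1) / 2 - (x + 1) / 4) k /
            (poch ((1 - (N : ℝ)) / 2) k * poch ((2 * ξ + 3) / 2) k * (Nat.factorial k : ℝ))

/-- Grid points `y_s` for the dual −1 Hahn polynomials. -/
def ygrid (η ξ : ℝ) (N : ℕ) (s : ℕ) : ℝ :=
  if N % 2 = 0 then (-1 : ℝ) ^ s * (2 * s - 2 * η - 2 * ξ - 2 * N - 1)
  else (-1 : ℝ) ^ s * (2 * s + 2 * η + 2 * ξ + 1)

/-- Weights `ϖ_s(η, ξ, N)` for the dual −1 Hahn polynomials. -/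
def varpi (η ξ : ℝ) (N : ℕ) (s : ℕ) : ℝ :=
  if N % 2 = 0 then
    if s % 2 = 0 then
      (-1 : ℝ) ^ (s / 2) * poch (-(N : ℝ) / 2) (s / 2) * poch (-(N : ℝ) / 2 - η + 1/2) (s / 2) *
        poch (-(N : ℝ) - η - ξ) (s / 2) /
        ((Nat.factorial (s / 2) : ℝ) * poch (-(N : ℝ) / 2 - ξ + 1/2) (s / 2) *
          poch (-(N : ℝ) / 2 - η - ξ) (s / 2))
    else
      (-1 : ℝ) ^ (s / 2) * poch (-(N : ℝ) / 2) (s / 2 + 1) * poch (-(N : ℝ) / 2 - η + 1/2) (s / 2) *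
        poch (-(N : ℝ) - η - ξ) (s / 2) /
        ((Nat.factorial (s / 2) : ℝ) * poch (-(N : ℝ) / 2 - ξ + 1/2) (s / 2) *
          poch (-(N : ℝ) / 2 - η - ξ) (s / 2 + 1))
  else
    if s % 2 = 0 then
      (-1 : ℝ) ^ (s / 2) * poch ((1 - (N : ℝ)) / 2) (s / 2) * poch (ξ + 1/2) (s / 2) *
        poch (η + ξ + 1) (s / 2) /
        ((Nat.factorial (s / 2) : ℝ) * poch (η + 1/2) (s / 2) *
          poch (((N : ℝ) + 3) / 2 + η + ξ) (s / 2))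
    else
      (-1 : ℝ) ^ (s / 2) * poch ((1 - (N : ℝ)) / 2) (s / 2) * poch (ξ + 1/2) (s / 2 + 1) *
        poch (η + ξ + 1) (s / 2) /
        ((Nat.factorial (s / 2) : ℝ) * poch (η + 1/2) (s / 2 + 1) *
          poch (((N : ℝ) + 3) / 2 + η + ξ) (s / 2))

/-- Normalizations `ν_n(η, ξ, N)` for the dual −1 Hahn polynomials. -/
def nuDual (η ξ : ℝ) (N : ℕ) (n : ℕ) : ℝ :=
  if N % 2 = 0 then
    if n % 2 = 0 then
      (16 : ℝ) ^ n * (Nat.factorial (n / 2) : ℝ) * poch (-(N : ℝ) / 2) (n / 2) *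
        poch (ξ + 1/2) (n / 2) * poch ((-(N : ℝ) - 2 * η + 1) / 2) (n / 2) *
        (poch (-(N : ℝ) - η - ξ) (N / 2) / poch ((-(N : ℝ) - 2 * ξ + 1) / 2) (N / 2))
    else
      -(16 : ℝ) ^ n * (Nat.factorial (n / 2) : ℝ) * poch (-(N : ℝ) / 2) (n / 2 + 1) *
        poch (ξ + 1/2) (n / 2 + 1) * poch ((-(N : ℝ) - 2 * η + 1) / 2) (n / 2) *
        (poch (-(N : ℝ) - η - ξ) (N / 2) / poch ((-(N : ℝ) - 2 * ξ + 1) / 2) (N / 2))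
  else
    if n % 2 = 0 then
      (16 : ℝ) ^ n * (Nat.factorial (n / 2) : ℝ) * poch ((1 - (N : ℝ)) / 2) (n / 2) *
        poch (ξ + 1/2) (n / 2) * poch (-(N : ℝ) / 2 - η) (n / 2) *
        (poch (η + ξ + 1) ((N + 1) / 2) / poch (η + 1/2) ((N + 1) / 2))
    else
      -(16 : ℝ) ^ n * (Nat.factorial (n / 2) : ℝ) * poch ((1 - (N : ℝ)) / 2) (n / 2) *
        poch (ξ + 1/2) (n / 2 + 1) * poch (-(N : ℝ) / 2 - η) (n / 2 + 1) *
        (poch (η + ξ + 1) ((N + 1) / 2) / poch (η + 1/2) ((N + 1) / 2))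

/-- The points `z_s = (-1)^{s+N+1} (2s + 2η + 2ξ + 1)`. -/
def zgrid (η ξ : ℝ) (N : ℕ) (s : ℕ) : ℝ :=
  (-1 : ℝ) ^ (s + N + 1) * (2 * s + 2 * η + 2 * ξ + 1)

/-- The reversed weights `ρ_s(η, ξ, N)`. -/
def rhoDual (η ξ : ℝ) (N : ℕ) (s : ℕ) : ℝ :=
  if N % 2 = 0 then varpi η ξ N (N - s) else varpi η ξ N s

/-- The quantity `ν_0(η, ξ, N)`. -/
def nu0 (η ξ : ℝ) (N : ℕ) : ℝ :=
  if N % 2 = 0 then poch (-(N : ℝ) - η - ξ) (N / 2) / poch ((-(N : ℝ) - 2 * ξ + 1) / 2) (N / 2)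
  else poch (η + ξ + 1) ((N + 1) / 2) / poch (η + 1/2) ((N + 1) / 2)

/-- Bannai–Ito recurrence coefficient `A_n`. -/
def BIA (ρ1 ρ2 r1 r2 : ℝ) (n : ℕ) : ℝ :=
  if n % 2 = 0 then
    ((n : ℝ) + 2 * ρ1 - 2 * r1 + 1) * ((n : ℝ) + 2 * ρ1 - 2 * r2 + 1) /
      (4 * ((n : ℝ) + (ρ1 + ρ2 - r1 - r2) + 1))
  else
    ((n : ℝ) + 2 * (ρ1 + ρ2 - r1 - r2) + 1) * ((n : ℝ) + 2 * ρ1 + 2 * ρ2 + 1) /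
      (4 * ((n : ℝ) + (ρ1 + ρ2 - r1 - r2) + 1))

/-- Bannai–Ito recurrence coefficient `C_n`. -/
def BIC (ρ1 ρ2 r1 r2 : ℝ) (n : ℕ) : ℝ :=
  if n % 2 = 0 then
    -((n : ℝ) * ((n : ℝ) - 2 * r1 - 2 * r2)) / (4 * ((n : ℝ) + (ρ1 + ρ2 - r1 - r2)))
  else
    -(((n : ℝ) + 2 * ρ2 - 2 * r2) * ((n : ℝ) + 2 * ρ2 - 2 * r1)) /
      (4 * ((n : ℝ) + (ρ1 + ρ2 - r1 - r2)))

/-- Monic Bannai–Ito polynomials, defined by the three-term recurrence. -/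
def BI (ρ1 ρ2 r1 r2 : ℝ) : ℕ → ℝ → ℝ
  | 0 => fun _ => 1
  | 1 => fun x => x - (ρ1 - BIA ρ1 ρ2 r1 r2 0 - BIC ρ1 ρ2 r1 r2 0)
  | (n + 2) => fun x =>
      (x - (ρ1 - BIA ρ1 ρ2 r1 r2 (n + 1) - BIC ρ1 ρ2 r1 r2 (n + 1))) * BI ρ1 ρ2 r1 r2 (n + 1) x
      - BIA ρ1 ρ2 r1 r2 n * BIC ρ1 ρ2 r1 r2 (n + 1) * BI ρ1 ρ2 r1 r2 n x

/-- Bannai–Ito normalization `η_n`. -/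
def BIeta (ρ1 ρ2 r1 r2 : ℝ) (n : ℕ) : ℝ :=
  (-1 : ℝ) ^ n * poch (ρ1 - r1 + 1/2) (n / 2 + n % 2) * poch (ρ2 - r1 + 1/2) (n / 2 + n % 2) *
    poch (1 - r1 - r2) (n / 2) /
    poch (((n / 2 : ℕ) : ℝ) + (ρ1 + ρ2 - r1 - r2) + 1) (n / 2 + n % 2)

/-- Bannai–Ito grid points `x_k`. -/
def BIx (ρ1 : ℝ) (k : ℕ) : ℝ := (-1 : ℝ) ^ k * ((k : ℝ) / 2 + ρ1 + 1/4) - 1/4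

/-- Bannai–Ito weights `w_k`. -/
def BIw (ρ1 ρ2 r1 r2 : ℝ) (k : ℕ) : ℝ :=
  ((-1 : ℝ) ^ k / (Nat.factorial (k / 2) : ℝ)) *
    (poch (ρ1 - r1 + 1/2) (k / 2 + k % 2) * poch (ρ1 - r2 + 1/2) (k / 2 + k % 2) *
      poch (ρ1 + ρ2 + 1) (k / 2) * poch (2 * ρ1 + 1) (k / 2)) /
    (poch (ρ1 + r1 + 1/2) (k / 2 + k % 2) * poch (ρ1 + r2 + 1/2) (k / 2 + k % 2) *
      poch (ρ1 - ρ2 + 1) (k / 2))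

/-- Bannai–Ito normalization `h_n` for even truncation parameter `N = 2 Ne`. -/
def BIhEven (ρ1 ρ2 r1 r2 : ℝ) (Ne : ℕ) (n : ℕ) : ℝ :=
  (Nat.factorial (n / 2) : ℝ) * (Nat.factorial Ne : ℝ) * poch (1 + 2 * ρ1) Ne *
    poch (1 + ρ1 + ρ2) (n / 2) *
    poch (1 + ((n / 2 : ℕ) : ℝ) + (ρ1 + ρ2 - r1 - r2)) (Ne - n / 2) *
    poch (1/2 + ρ1 - r1) (n / 2 + n % 2) * poch (1/2 + ρ2 - r1) (n / 2 + n % 2) /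
  ((Nat.factorial (Ne - n / 2 - n % 2) : ℝ) * poch (1/2 + ρ1 + r1) (Ne - n / 2) *
    poch (1/2 + ((n / 2 : ℕ) : ℝ) + ((n % 2 : ℕ) : ℝ) + ρ2 - r2) (Ne - n / 2 - n % 2) *
    (poch (1 + (n : ℝ) + (ρ1 + ρ2 - r1 - r2)) (n / 2 + n % 2)) ^ 2)

/-- Bannai–Ito normalization `h_n` for odd truncation parameter `N = 2 Ne + 1`. -/
def BIhOdd (ρ1 ρ2 r1 r2 : ℝ) (Ne : ℕ) (n : ℕ) : ℝ :=
  (Nat.factorial (n / 2) : ℝ) * (Nat.factorial Ne : ℝ) * poch (1 + 2 * ρ1) (Ne + 1) *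
    poch (1 - r1 - r2) (n / 2) *
    poch (1 + ((n / 2 : ℕ) : ℝ) + (ρ1 + ρ2 - r1 - r2)) (Ne + 1 - n / 2) *
    poch (1/2 + ρ1 - r1) (n / 2 + n % 2) * poch (1/2 + ρ1 - r2) (n / 2 + n % 2) /
  ((Nat.factorial (Ne - n / 2) : ℝ) * poch (1/2 + ρ1 + r1) (Ne + 1 - n / 2 - n % 2) *
    poch (1/2 + ((n / 2 : ℕ) : ℝ) + ((n % 2 : ℕ) : ℝ) + ρ2 - r2) (Ne + 1 - n / 2 - n % 2) *
    (poch (1 + (n : ℝ) + (ρ1 + ρ2 - r1 - r2)) (n / 2 + n % 2)) ^ 2)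

/-- Bannai–Ito normalization `h_n` with truncation parameter `N`. -/
def BIh (ρ1 ρ2 r1 r2 : ℝ) (N : ℕ) (n : ℕ) : ℝ :=
  if N % 2 = 0 then BIhEven ρ1 ρ2 r1 r2 (N / 2) n else BIhOdd ρ1 ρ2 r1 r2 (N / 2) n

/-- Phase `φ(n1, n2, j)` of the Clebsch–Gordan coefficients. -/
def cgPhi (n1 n2 j : ℕ) : ℕ := n1 * (n1 - 1) / 2 + j * (j + 1) / 2 + n1 * (n1 + n2 + 1)

/-- Clebsch–Gordan coefficients `C^{N,j}_{n1,n2}` of `osp(1|2)`. -/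
def CG (μ1 μ2 ε2 : ℝ) (n1 n2 j : ℕ) : ℝ :=
  (-1 : ℝ) ^ (cgPhi n1 n2 j) * (ε2 / 2) ^ n1 *
    Real.sqrt (mufact μ2 n2 * rhoDual μ2 μ1 (n1 + n2) j /
      (mufact μ1 n1 * mufact μ2 (n1 + n2) * nu0 μ2 μ1 (n1 + n2))) *
    Rdual μ2 μ1 (n1 + n2) n1 (zgrid μ2 μ1 (n1 + n2) j)

/-- Phase `φ` of the Racah coefficients. -/
def racahPhi (j12 j23 j123 : ℕ) : ℕ :=
  j123 * ((j12 - 1) * j12 / 2) + (j123 + 1) * (j23 + (j12 + 1) * j12 / 2)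

/-- Racah coefficients of `osp(1|2)` in terms of Bannai–Ito polynomials. -/
def racah (μ1 μ2 μ3 ε3 : ℝ) (j12 j23 j123 : ℕ) : ℝ :=
  (-1 : ℝ) ^ (racahPhi j12 j23 j123) * ε3 ^ j12 *
    Real.sqrt (BIw ((μ2 + μ3) / 2) ((μ1 + (-1 : ℝ) ^ j123 * (μ1 + μ2 + μ3 + 1 + j123)) / 2)
        ((μ3 - μ2) / 2) (((-1 : ℝ) ^ j123 * (μ1 + μ2 + μ3 + 1 + j123) - μ1) / 2) j23 /
      BIh ((μ2 + μ3) / 2) ((μ1 + (-1 : ℝ) ^ j123 * (μ1 + μ2 + μ3 + 1 + j123)) / 2)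
        ((μ3 - μ2) / 2) (((-1 : ℝ) ^ j123 * (μ1 + μ2 + μ3 + 1 + j123) - μ1) / 2) j123 j12) *
    BI ((μ2 + μ3) / 2) ((μ1 + (-1 : ℝ) ^ j123 * (μ1 + μ2 + μ3 + 1 + j123)) / 2)
      ((μ3 - μ2) / 2) (((-1 : ℝ) ^ j123 * (μ1 + μ2 + μ3 + 1 + j123) - μ1) / 2) j12
      (BIx ((μ2 + μ3) / 2) j23)

/-- The hypergeometric function `₀F₁(; b; x)`. -/
def hyp0F1 (b x : ℝ) : ℝ := ∑' k : ℕ, x ^ k / (poch b k * (Nat.factorial k : ℝ))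

/-- Truncated Gauss hypergeometric sum `₂F₁` (used for terminating series). -/
def hyp2F1fin (m : ℕ) (a1 a2 b x : ℝ) : ℝ :=
  ∑ k ∈ Finset.range m, poch a1 k * poch a2 k / (poch b k * (Nat.factorial k : ℝ)) * x ^ k

/-- The function `f_e(j)` appearing in the bilinear generating function. -/
def fe (μ1 μ2 ε2 z1 z2 : ℝ) (j : ℕ) : ℝ :=
  (-1 : ℝ) ^ (j / 2 + j % 2) * (z2 ^ j / Real.sqrt (mufact μ2 j)) *
    Real.sqrt (poch (1/2 + μ1) (j / 2 + j % 2) /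
      poch (((j / 2 : ℕ) : ℝ) + ((j % 2 : ℕ) : ℝ) + 1 + μ1 + μ2) (j / 2 + j % 2)) *
    (hyp2F1fin (j + 1) (-((j / 2 : ℕ) : ℝ)) (1/2 - ((j / 2 : ℕ) : ℝ) - ((j % 2 : ℕ) : ℝ) - μ2)
        (1/2 + μ1) (-(z1 / z2) ^ 2)
      + ((-1 : ℝ) ^ (j % 2) * z1 * ((j : ℝ) + 2 * μ2 * ((j % 2 : ℕ) : ℝ)) /
          (z2 * ε2 * (1 + 2 * μ1))) *
        hyp2F1fin (j + 1) (1 - ((j / 2 : ℕ) : ℝ) - ((j % 2 : ℕ) : ℝ)) (1/2 - ((j / 2 : ℕ) : ℝ) - μ2)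
          (3/2 + μ1) (-(z1 / z2) ^ 2))

/-- The function `f_o(j)` appearing in the bilinear generating function. -/
def fo (μ1 μ2 ε2 z1 z2 : ℝ) (j : ℕ) : ℝ :=
  (-1 : ℝ) ^ (j / 2 + j % 2) * (Real.sqrt ((z1 / z2) ^ 2 + 1))⁻¹ *
    (z2 ^ j / Real.sqrt (mufact μ2 j)) *
    Real.sqrt (poch (1/2 + μ1) (j / 2 + j % 2) /
      poch (((j / 2 : ℕ) : ℝ) + ((j % 2 : ℕ) : ℝ) + 1 + μ1 + μ2) (j / 2 + j % 2)) *
    (hyp2F1fin (j + 1) (-((j / 2 : ℕ) : ℝ) - ((j % 2 : ℕ) : ℝ)) (-1/2 - ((j / 2 : ℕ) : ℝ) - μ2)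
        (1/2 + μ1) (-(z1 / z2) ^ 2)
      + ((-1 : ℝ) ^ (j % 2) * z1 * ((j : ℝ) + 1 + 2 * μ1 + 2 * μ2 * ((j % 2 : ℕ) : ℝ)) /
          (z2 * ε2 * (1 + 2 * μ1))) *
        hyp2F1fin (j + 1) (-((j / 2 : ℕ) : ℝ)) (1/2 - ((j / 2 : ℕ) : ℝ) - ((j % 2 : ℕ) : ℝ) - μ2)
          (3/2 + μ1) (-(z1 / z2) ^ 2))

/-- Dunkl realization: `J₊`. -/
def Jp (f : ℝ → ℝ) : ℝ → ℝ := fun z => z * f z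

/-- Dunkl realization: `J₋` (the Dunkl derivative). -/
def Jm (μ : ℝ) (f : ℝ → ℝ) : ℝ → ℝ := fun z => deriv f z + (μ / z) * (f z - f (-z))

/-- Dunkl realization: `J₀`. -/
def J0op (μ : ℝ) (f : ℝ → ℝ) : ℝ → ℝ := fun z => z * deriv f z + (μ + 1/2) * f z

/-- Reflection operator `R`. -/
def Rop (f : ℝ → ℝ) : ℝ → ℝ := fun z => f (-z)

open Set
open scoped Polynomial

lemma poch_succ (a : ℝ) (k : ℕ) : poch a (k + 1) = poch a k * (a + k) :=
  Finset.prod_range_succ _ _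

lemma poch_eq_eval_ascPochhammer (a : ℝ) (k : ℕ) : poch a k = (ascPochhammer ℝ k).eval a := by
  induction k with
  | zero => simp [poch]
  | succ k ih => rw [poch_succ, ih, ascPochhammer_succ_eval]

lemma poch_pos {a : ℝ} (ha : 0 < a) (k : ℕ) : 0 < poch a k := by
  rw [poch_eq_eval_ascPochhammer]
  exact ascPochhammer_pos k a ha

lemma Gamma_add_nat_eq_mul_poch {s : ℝ} (hs : 0 < s) (k : ℕ) :
    Real.Gamma (s + k) = Real.Gamma s * poch s k := by
  induction k with
  | zero => simp [poch]
  | succ k ih =>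
    rw [Nat.cast_succ, ← add_assoc, Real.Gamma_add_one (by positivity), ih, poch_succ]
    ring

lemma poch_neg_nat_div_factorial (n k : ℕ) :
    poch (-(n : ℝ)) k / k.factorial = (-1) ^ k * n.choose k := by
  rw [poch_eq_eval_ascPochhammer, ascPochhammer_eval_neg_eq_descPochhammer,
    descPochhammer_eval_eq_descFactorial, Nat.descFactorial_eq_factorial_mul_choose]
  push_cast
  field_simp

lemma sum_neg_one_pow_mul_choose_mul_eval (Q : ℝ[X]) (n : ℕ) :
    ∑ k ∈ Finset.range (n + 1), (-1 : ℝ) ^ k * n.choose k * Q.eval (k : ℝ)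
      = (-1) ^ n * (fwdDiff 1)^[n] Q.eval 0 := by
  rw [fwdDiff_iter_eq_sum_shift, Finset.mul_sum]
  refine Finset.sum_congr rfl fun k hk => ?_
  obtain ⟨d, rfl⟩ := Nat.exists_eq_add_of_le (Nat.lt_succ_iff.1 (Finset.mem_range.1 hk))
  simp only [zsmul_eq_mul, nsmul_eq_mul, mul_one, zero_add, Nat.add_sub_cancel_left]
  push_cast
  have hsq : ((-1 : ℝ) ^ d) * (-1) ^ d = 1 := by rw [← pow_add, Even.neg_one_pow ⟨d, rfl⟩]
  linear_combination -(-1 : ℝ) ^ k * ((k + d).choose k : ℝ) * Q.eval (k : ℝ) * hsq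

lemma natDegree_ascPochhammer_comp_X_add_C (c : ℝ) (j : ℕ) :
    ((ascPochhammer ℝ j).comp (Polynomial.X + Polynomial.C c)).natDegree = j := by
  rw [Polynomial.natDegree_comp, ascPochhammer_natDegree, Polynomial.natDegree_X_add_C, mul_one]

lemma poch_add_eq_eval_comp (c x : ℝ) (j : ℕ) :
    poch (c + x) j = ((ascPochhammer ℝ j).comp (Polynomial.X + Polynomial.C c)).eval x := by
  simp [poch_eq_eval_ascPochhammer, add_comm]

lemma sum_neg_one_pow_mul_choose_mul_poch_of_lt (c : ℝ) {j n : ℕ} (hj : j < n) :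
    ∑ k ∈ Finset.range (n + 1), (-1 : ℝ) ^ k * n.choose k * poch (c + k) j = 0 := by
  have hdeg := (natDegree_ascPochhammer_comp_X_add_C c j).trans_lt hj
  simp_rw [poch_add_eq_eval_comp, sum_neg_one_pow_mul_choose_mul_eval,
    Polynomial.fwdDiff_iter_eq_zero_of_degree_lt hdeg, Pi.zero_apply, mul_zero]

lemma sum_neg_one_pow_mul_choose_mul_poch_self (c : ℝ) (n : ℕ) :
    ∑ k ∈ Finset.range (n + 1), (-1 : ℝ) ^ k * n.choose k * poch (c + k) n
      = (-1) ^ n * n.factorial := by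
  have hdiff :=
    ((ascPochhammer ℝ n).comp (Polynomial.X + Polynomial.C c)).fwdDiff_iter_degree_eq_factorial
  rw [natDegree_ascPochhammer_comp_X_add_C,
    ((monic_ascPochhammer ℝ n).comp_X_add_C c).leadingCoeff, one_smul] at hdiff
  simp_rw [poch_add_eq_eval_comp, sum_neg_one_pow_mul_choose_mul_eval, hdiff, Pi.natCast_apply]

lemma laguerre_eq_sum (α : ℝ) (n : ℕ) (x : ℝ) :
    laguerre α n x = ∑ k ∈ Finset.range (n + 1),
      poch (α + 1) n / n.factorial * ((-1) ^ k * n.choose k / poch (α + 1) k) * x ^ k := by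
  rw [laguerre, Finset.mul_sum]
  refine Finset.sum_congr rfl fun k _ => ?_
  rw [← poch_neg_nat_div_factorial]
  ring

lemma laguerre_mul_rpow_mul_exp_eq_sum (α β : ℝ) (n : ℕ) {u : ℝ} (hu : 0 < u) :
    laguerre α n u * (u ^ β * exp (-u)) = ∑ k ∈ Finset.range (n + 1),
      poch (α + 1) n / n.factorial * ((-1) ^ k * n.choose k / poch (α + 1) k) *
        (u ^ (β + k) * exp (-u)) := by
  rw [laguerre_eq_sum, Finset.sum_mul]
  refine Finset.sum_congr rfl fun k _ => ?_
  rw [Real.rpow_add hu, Real.rpow_natCast]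
  ring

lemma neg_one_lt_add_natCast {a : ℝ} (ha : -1 < a) (k : ℕ) : -1 < a + k := by
  linarith [k.cast_nonneg (α := ℝ)]

lemma integrableOn_rpow_mul_exp_neg {s : ℝ} (hs : -1 < s) :
    IntegrableOn (fun u : ℝ => u ^ s * exp (-u)) (Ioi 0) := by
  have := Real.GammaIntegral_convergent (s := s + 1) (by linarith)
  simpa only [add_sub_cancel_right, mul_comm] using this

lemma integral_rpow_mul_exp_neg {s : ℝ} (hs : -1 < s) :
    ∫ u in Ioi (0 : ℝ), u ^ s * exp (-u) = Gamma (s + 1) := by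
  simp_rw [Real.Gamma_eq_integral (show 0 < s + 1 by linarith), add_sub_cancel_right, mul_comm]

lemma integrableOn_laguerre_mul_rpow_mul_exp (α : ℝ) {β : ℝ} (hβ : -1 < β) (n : ℕ) :
    IntegrableOn (fun u => laguerre α n u * (u ^ β * exp (-u))) (Ioi 0) := by
  refine IntegrableOn.congr_fun ?_
    (fun u hu => (laguerre_mul_rpow_mul_exp_eq_sum α β n hu).symm) measurableSet_Ioi
  refine integrable_finsetSum _ fun k _ => Integrable.const_mul ?_ _
  exact integrableOn_rpow_mul_exp_neg (neg_one_lt_add_natCast hβ k)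

lemma integral_laguerre_mul_rpow_add_nat_mul_exp {α : ℝ} (hα : -1 < α) (n j : ℕ) :
    ∫ u in Ioi (0 : ℝ), laguerre α n u * (u ^ (α + j) * exp (-u))
      = Gamma (α + 1) * poch (α + 1) n / n.factorial *
          ∑ k ∈ Finset.range (n + 1), (-1) ^ k * n.choose k * poch (α + 1 + k) j := by
  have hα1 : 0 < α + 1 := by linarith
  have hexp (k : ℕ) : -1 < α + j + k := neg_one_lt_add_natCast (neg_one_lt_add_natCast hα j) k
  rw [setIntegral_congr_fun measurableSet_Ioi
      (fun u hu => laguerre_mul_rpow_mul_exp_eq_sum α (α + j) n hu),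
    integral_finsetSum _ fun k _ => (integrableOn_rpow_mul_exp_neg (hexp k)).const_mul _,
    Finset.mul_sum]
  refine Finset.sum_congr rfl fun k _ => ?_
  have hGamma :
      Gamma (α + j + k + 1) = Gamma (α + 1) * poch (α + 1) k * poch (α + 1 + k) j := by
    rw [show α + j + k + 1 = α + 1 + k + j by ring, Gamma_add_nat_eq_mul_poch (by positivity),
      Gamma_add_nat_eq_mul_poch hα1]
  rw [integral_const_mul, integral_rpow_mul_exp_neg (hexp k), hGamma]
  field_simp [(poch_pos hα1 k).ne']

lemma integral_laguerre_mul_rpow_add_nat_mul_exp_of_lt {α : ℝ} (hα : -1 < α) {n j : ℕ}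
    (hj : j < n) : ∫ u in Ioi (0 : ℝ), laguerre α n u * (u ^ (α + j) * exp (-u)) = 0 := by
  rw [integral_laguerre_mul_rpow_add_nat_mul_exp hα,
    sum_neg_one_pow_mul_choose_mul_poch_of_lt _ hj, mul_zero]

lemma integral_laguerre_mul_rpow_add_self_mul_exp {α : ℝ} (hα : -1 < α) (n : ℕ) :
    ∫ u in Ioi (0 : ℝ), laguerre α n u * (u ^ (α + n) * exp (-u))
      = (-1) ^ n * Gamma (α + 1 + n) := by
  rw [integral_laguerre_mul_rpow_add_nat_mul_exp hα, sum_neg_one_pow_mul_choose_mul_poch_self,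
    Gamma_add_nat_eq_mul_poch (by linarith)]
  field_simp

lemma laguerre_mul_laguerre_mul_rpow_mul_exp_eq_sum (α : ℝ) (n m : ℕ) {u : ℝ} (hu : 0 < u) :
    laguerre α n u * laguerre α m u * (u ^ α * exp (-u)) = ∑ j ∈ Finset.range (m + 1),
      poch (α + 1) m / m.factorial * ((-1) ^ j * m.choose j / poch (α + 1) j) *
        (laguerre α n u * (u ^ (α + j) * exp (-u))) := by
  rw [laguerre_eq_sum α m, Finset.mul_sum, Finset.sum_mul]
  refine Finset.sum_congr rfl fun j _ => ?_
  rw [Real.rpow_add hu, Real.rpow_natCast]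
  ring

lemma integrableOn_laguerre_mul_laguerre_mul_rpow_mul_exp {α : ℝ} (hα : -1 < α) (n m : ℕ) :
    IntegrableOn (fun u => laguerre α n u * laguerre α m u * (u ^ α * exp (-u))) (Ioi 0) := by
  refine IntegrableOn.congr_fun ?_
    (fun u hu => (laguerre_mul_laguerre_mul_rpow_mul_exp_eq_sum α n m hu).symm) measurableSet_Ioi
  refine integrable_finsetSum _ fun j _ => Integrable.const_mul ?_ _
  exact integrableOn_laguerre_mul_rpow_mul_exp α (neg_one_lt_add_natCast hα j) n

lemma integral_laguerre_mul_laguerre_mul_rpow_mul_exp_of_le {α : ℝ} (hα : -1 < α) {n m : ℕ}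
    (hmn : m ≤ n) :
    ∫ u in Ioi (0 : ℝ), laguerre α n u * laguerre α m u * (u ^ α * exp (-u))
      = if n = m then Gamma (α + 1 + n) / n.factorial else 0 := by
  rw [setIntegral_congr_fun measurableSet_Ioi
      (fun u hu => laguerre_mul_laguerre_mul_rpow_mul_exp_eq_sum α n m hu),
    integral_finsetSum _ fun j _ =>
      (integrableOn_laguerre_mul_rpow_mul_exp α (neg_one_lt_add_natCast hα j) n).const_mul _]
  simp_rw [integral_const_mul]
  have hlower : ∀ j < n,
      ∫ u in Ioi (0 : ℝ), laguerre α n u * (u ^ (α + j) * exp (-u)) = 0 :=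
    fun j hj => integral_laguerre_mul_rpow_add_nat_mul_exp_of_lt hα hj
  rcases hmn.lt_or_eq with hlt | rfl
  · rw [if_neg hlt.ne']
    exact Finset.sum_eq_zero fun j hj => by
      rw [hlower j (by linarith [Finset.mem_range.1 hj]), mul_zero]
  · rw [if_pos rfl, Finset.sum_range_succ, Finset.sum_eq_zero fun j hj => by
      rw [hlower j (Finset.mem_range.1 hj), mul_zero], zero_add,
      integral_laguerre_mul_rpow_add_self_mul_exp hα, Nat.choose_self]
    field_simp [(poch_pos (show 0 < α + 1 by linarith) m).ne']
    rw [← pow_mul, pow_mul', neg_one_sq, one_pow, Nat.cast_one, one_mul, one_mul]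

lemma integral_laguerre_mul_laguerre_mul_rpow_mul_exp {α : ℝ} (hα : -1 < α) (n m : ℕ) :
    ∫ u in Ioi (0 : ℝ), laguerre α n u * laguerre α m u * (u ^ α * exp (-u))
      = if n = m then Gamma (α + 1 + n) / n.factorial else 0 := by
  rcases le_total m n with hmn | hnm
  · exact integral_laguerre_mul_laguerre_mul_rpow_mul_exp_of_le hα hmn
  · simp_rw [mul_comm (laguerre α n _),
      integral_laguerre_mul_laguerre_mul_rpow_mul_exp_of_le hα hnm, eq_comm (a := m)]
    split_ifs with h <;> simp [h]

lemma half_sq_sub_sq_pos {γ x : ℝ} (hx : |γ| < x) : 0 < (x ^ 2 - γ ^ 2) / 2 := by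
  have : |γ| ^ 2 < x ^ 2 := pow_lt_pow_left₀ hx (abs_nonneg γ) two_ne_zero
  rw [sq_abs] at this
  linarith

lemma image_half_sq_sub_sq_Ioi_abs (γ : ℝ) :
    (fun x : ℝ => (x ^ 2 - γ ^ 2) / 2) '' Ioi |γ| = Ioi 0 := by
  ext u
  constructor
  · rintro ⟨x, hx, rfl⟩
    exact half_sq_sub_sq_pos hx
  · intro hu
    have hu : 0 < u := hu
    refine ⟨√(2 * u + γ ^ 2), ?_, ?_⟩
    · rw [mem_Ioi, ← Real.sqrt_sq_eq_abs]
      exact Real.sqrt_lt_sqrt (sq_nonneg γ) (by linarith)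
    · simp only [Real.sq_sqrt (by positivity : 0 ≤ 2 * u + γ ^ 2)]
      ring

lemma injOn_half_sq_sub_sq_Ioi_abs (γ : ℝ) :
    InjOn (fun x : ℝ => (x ^ 2 - γ ^ 2) / 2) (Ioi |γ|) := by
  intro x hx y hy hxy
  have hx : 0 < x := (abs_nonneg γ).trans_lt hx
  have hy : 0 < y := (abs_nonneg γ).trans_lt hy
  exact (sq_eq_sq₀ hx.le hy.le).1 (by simp only at hxy; linarith)

lemma hasDerivAt_half_sq_sub_sq (γ x : ℝ) :
    HasDerivAt (fun x : ℝ => (x ^ 2 - γ ^ 2) / 2) x x :=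
  (((hasDerivAt_pow 2 x).sub_const (γ ^ 2)).div_const 2).congr_deriv (by norm_num)

lemma integral_Ioi_abs_mul_comp_half_sq_sub_sq (γ : ℝ) (G : ℝ → ℝ) :
    ∫ x in Ioi |γ|, x * G ((x ^ 2 - γ ^ 2) / 2) = ∫ u in Ioi 0, G u := by
  rw [← image_half_sq_sub_sq_Ioi_abs γ,
    integral_image_eq_integral_abs_deriv_smul measurableSet_Ioi
      (fun x _ => (hasDerivAt_half_sq_sub_sq γ x).hasDerivWithinAt)
      (injOn_half_sq_sub_sq_Ioi_abs γ)]
  refine setIntegral_congr_fun measurableSet_Ioi fun x hx => ?_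
  rw [abs_of_pos ((abs_nonneg γ).trans_lt hx), smul_eq_mul]

lemma integrableOn_Ioi_abs_mul_comp_half_sq_sub_sq {γ : ℝ} {G : ℝ → ℝ}
    (hG : IntegrableOn G (Ioi 0)) :
    IntegrableOn (fun x => x * G ((x ^ 2 - γ ^ 2) / 2)) (Ioi |γ|) := by
  rw [← image_half_sq_sub_sq_Ioi_abs γ, integrableOn_image_iff_integrableOn_abs_deriv_smul
    measurableSet_Ioi (fun x _ => (hasDerivAt_half_sq_sub_sq γ x).hasDerivWithinAt)
    (injOn_half_sq_sub_sq_Ioi_abs γ)] at hG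
  refine hG.congr_fun (fun x hx => ?_) measurableSet_Ioi
  dsimp only
  rw [abs_of_pos ((abs_nonneg γ).trans_lt hx), smul_eq_mul]

/-- `(x + c) G(u) = (1 + c/x) · x G(u)`, and `|1 + c/x| ≤ 2` on `(|γ|, ∞)`. -/
lemma integrableOn_Ioi_abs_add_mul_comp_half_sq_sub_sq {γ c : ℝ} (hc : |c| ≤ |γ|)
    {G : ℝ → ℝ} (hG : IntegrableOn G (Ioi 0)) :
    IntegrableOn (fun x => (x + c) * G ((x ^ 2 - γ ^ 2) / 2)) (Ioi |γ|) := by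
  have hbound : ∀ᵐ x ∂volume.restrict (Ioi |γ|), ‖1 + c / x‖ ≤ 2 := by
    refine (ae_restrict_iff' measurableSet_Ioi).2 (ae_of_all _ fun x hx => ?_)
    have hx : |c| < x := hc.trans_lt hx
    have hx0 : 0 < x := (abs_nonneg c).trans_lt hx
    calc ‖1 + c / x‖ ≤ 1 + |c| / x := by
          rw [Real.norm_eq_abs, ← abs_of_pos hx0, ← abs_div, abs_of_pos hx0]
          exact (abs_add_le _ _).trans_eq (by rw [abs_one])
      _ ≤ 2 := by linarith [(div_le_one hx0).2 hx.le]
  refine IntegrableOn.congr_fun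
    ((integrableOn_Ioi_abs_mul_comp_half_sq_sub_sq hG).bdd_mul (by fun_prop) hbound)
    (fun x hx => ?_) measurableSet_Ioi
  have hx0 : x ≠ 0 := ((abs_nonneg γ).trans_lt hx).ne'
  field_simp

lemma neg_mem_Fset_iff {γ x : ℝ} : -x ∈ Fset γ ↔ x ∈ Fset γ := by
  simp only [Fset, mem_union, mem_Iio, mem_Ioi]
  constructor <;> rintro (h | h) <;> [right; left; right; left] <;> linarith

lemma measurableSet_Fset (γ : ℝ) : MeasurableSet (Fset γ) :=
  measurableSet_Iio.union measurableSet_Ioi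

lemma setIntegral_Fset_eq_zero_of_odd {γ : ℝ} {f : ℝ → ℝ} (hf : ∀ x, f (-x) = -f x) :
    ∫ x in Fset γ, f x = 0 := by
  have hodd : ∀ x, (Fset γ).indicator f (-x) = -(Fset γ).indicator f x := fun x => by
    by_cases hx : x ∈ Fset γ <;> simp [indicator, neg_mem_Fset_iff, hx, hf]
  have h := integral_neg_eq_self ((Fset γ).indicator f) volume
  rw [integral_indicator (measurableSet_Fset γ)] at h
  simp_rw [hodd, integral_neg, integral_indicator (measurableSet_Fset γ)] at h
  linarith

lemma setIntegral_Fset_eq_two_mul {γ c : ℝ} (hc : |c| ≤ |γ|) {f G : ℝ → ℝ}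
    (hG : IntegrableOn G (Ioi 0))
    (hpos : ∀ x, |γ| < x → f x = (x + c) * G ((x ^ 2 - γ ^ 2) / 2))
    (hneg : ∀ x, |γ| < x → f (-x) = (x - c) * G ((x ^ 2 - γ ^ 2) / 2)) :
    ∫ x in Fset γ, f x = 2 * ∫ u in Ioi 0, G u := by
  have hf_pos : IntegrableOn f (Ioi |γ|) :=
    (integrableOn_Ioi_abs_add_mul_comp_half_sq_sub_sq hc hG).congr_fun
      (fun x hx => (hpos x hx).symm) measurableSet_Ioi
  have hf_neg : IntegrableOn (fun x => f (-x)) (Ioi |γ|) :=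
    (integrableOn_Ioi_abs_add_mul_comp_half_sq_sub_sq (c := -c) (by rwa [abs_neg]) hG).congr_fun
      (fun x hx => by rw [hneg x hx, sub_eq_add_neg]) measurableSet_Ioi
  have hf_neg' : IntegrableOn f (Iio (-|γ|)) := by
    have h : IntegrableOn (fun x => f (-x)) (Ioi (-(-|γ|))) := by rwa [neg_neg]
    simpa only [neg_neg] using h.comp_neg_Iio
  have hreflect : ∫ x in Iio (-|γ|), f x = ∫ x in Ioi |γ|, f (-x) := by
    rw [integral_comp_neg_Ioi, integral_Iic_eq_integral_Iio]
  have hdisj : Disjoint (Iio (-|γ|)) (Ioi |γ|) :=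
    (Iic_disjoint_Ioi (neg_le_self (abs_nonneg γ))).mono_left Iio_subset_Iic_self
  calc ∫ x in Fset γ, f x = (∫ x in Iio (-|γ|), f x) + ∫ x in Ioi |γ|, f x :=
        setIntegral_union hdisj measurableSet_Ioi hf_neg' hf_pos
    _ = ∫ x in Ioi |γ|, 2 * (x * G ((x ^ 2 - γ ^ 2) / 2)) := by
        rw [hreflect, ← integral_add hf_neg hf_pos]
        refine setIntegral_congr_fun measurableSet_Ioi fun x hx => ?_
        simp only [hpos x hx, hneg x hx]
        ring
    _ = 2 * ∫ u in Ioi 0, G u := by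
        rw [integral_const_mul, integral_Ioi_abs_mul_comp_half_sq_sub_sq]

def laguerreNormalized (α : ℝ) (p : ℕ) (u : ℝ) : ℝ :=
  (-1) ^ p * √(p.factorial * Gamma (α + 1) / Gamma (p + α + 1)) * laguerre α p u

lemma laguerreNormalized_mul_laguerreNormalized (α : ℝ) (p q : ℕ) (u : ℝ) :
    laguerreNormalized α p u * laguerreNormalized α q u * (u ^ α * exp (-u))
      = ((-1) ^ p * √(p.factorial * Gamma (α + 1) / Gamma (p + α + 1))) *
          ((-1) ^ q * √(q.factorial * Gamma (α + 1) / Gamma (q + α + 1))) *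
          (laguerre α p u * laguerre α q u * (u ^ α * exp (-u))) := by
  simp only [laguerreNormalized]
  ring

lemma integrableOn_laguerreNormalized_mul {α : ℝ} (hα : -1 < α) (p q : ℕ) :
    IntegrableOn (fun u => laguerreNormalized α p u * laguerreNormalized α q u *
      (u ^ α * exp (-u))) (Ioi 0) := by
  simp_rw [laguerreNormalized_mul_laguerreNormalized]
  exact (integrableOn_laguerre_mul_laguerre_mul_rpow_mul_exp hα p q).const_mul _

lemma integral_laguerreNormalized_mul {α : ℝ} (hα : -1 < α) (p q : ℕ) :
    ∫ u in Ioi (0 : ℝ),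
        laguerreNormalized α p u * laguerreNormalized α q u * (u ^ α * exp (-u))
      = if p = q then Gamma (α + 1) else 0 := by
  simp_rw [laguerreNormalized_mul_laguerreNormalized, integral_const_mul,
    integral_laguerre_mul_laguerre_mul_rpow_mul_exp hα]
  split_ifs with h
  · subst h
    have hΓ : 0 < Gamma (p + α + 1) :=
      Real.Gamma_pos_of_pos (by linarith [neg_one_lt_add_natCast hα p])
    have hsq := Real.mul_self_sqrt (show 0 ≤ p.factorial * Gamma (α + 1) / Gamma (p + α + 1) by
      have := Real.Gamma_pos_of_pos (show 0 < α + 1 by linarith)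
      positivity)
    rw [mul_mul_mul_comm, ← pow_add, Even.neg_one_pow ⟨p, rfl⟩, one_mul, hsq,
      show α + 1 + p = p + α + 1 by ring]
    field_simp
  · rw [mul_zero]

lemma P_of_even {μ γ : ℝ} {n : ℕ} (hn : n % 2 = 0) (x : ℝ) :
    P μ γ n x = laguerreNormalized (μ - 1/2) (n / 2) ((x ^ 2 - γ ^ 2) / 2) := by
  rw [P, if_pos hn, laguerreNormalized, show μ - 1/2 + 1 = μ + 1/2 by ring,
    show ((n / 2 : ℕ) : ℝ) + (μ - 1/2) + 1 = (n / 2 : ℕ) + μ + 1/2 by ring]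

lemma P_of_odd {μ γ : ℝ} {n : ℕ} (hn : n % 2 = 1) (x : ℝ) :
    P μ γ n x = (x - γ) / √(2 * μ + 1) *
      laguerreNormalized (μ + 1/2) (n / 2) ((x ^ 2 - γ ^ 2) / 2) := by
  rw [P, if_neg (by omega), laguerreNormalized, show μ + 1/2 + 1 = μ + 3/2 by ring,
    show ((n / 2 : ℕ) : ℝ) + (μ + 1/2) + 1 = (n / 2 : ℕ) + μ + 3/2 by ring]
  ring

lemma setIntegral_P_mul_P_mul_w_of_even {μ γ : ℝ} (hμ : 0 < μ) {n m : ℕ} (hn : n % 2 = 0)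
    (hm : m % 2 = 0) :
    ∫ x in Fset γ, P μ γ n x * P μ γ m x * w μ γ x
      = if n / 2 = m / 2 then 2 * Gamma (μ + 1/2) else 0 := by
  have hα : -1 < μ - 1/2 := by linarith
  rw [setIntegral_Fset_eq_two_mul le_rfl (integrableOn_laguerreNormalized_mul hα (n / 2) (m / 2)),
    integral_laguerreNormalized_mul hα, show μ - 1/2 + 1 = μ + 1/2 by ring, mul_ite, mul_zero]
  · intro x hx
    simp only [P_of_even hn, P_of_even hm, w, Real.sign_of_pos ((abs_nonneg γ).trans_lt hx)]
    ring
  · intro x hx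
    simp only [P_of_even hn, P_of_even hm, w, neg_sq,
      Real.sign_of_neg (neg_neg_of_pos ((abs_nonneg γ).trans_lt hx))]
    ring

lemma setIntegral_P_mul_P_mul_w_of_odd {μ γ : ℝ} (hμ : 0 < μ) {n m : ℕ} (hn : n % 2 = 1)
    (hm : m % 2 = 1) :
    ∫ x in Fset γ, P μ γ n x * P μ γ m x * w μ γ x
      = if n / 2 = m / 2 then 2 * Gamma (μ + 1/2) else 0 := by
  have hα : -1 < μ + 1/2 := by linarith
  have hsqrt : √(2 * μ + 1) ^ 2 = 2 * μ + 1 := Real.sq_sqrt (by linarith)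
  have hsqrt0 : √(2 * μ + 1) ≠ 0 := (Real.sqrt_pos.2 (by linarith)).ne'
  have hweight : ∀ x, |γ| < x → ((x ^ 2 - γ ^ 2) / 2) ^ (μ + 1/2)
      = ((x ^ 2 - γ ^ 2) / 2) ^ (μ - 1/2) * ((x ^ 2 - γ ^ 2) / 2) := fun x hx => by
    rw [show μ + 1/2 = μ - 1/2 + 1 by ring, Real.rpow_add_one (half_sq_sub_sq_pos hx).ne']
  rw [setIntegral_Fset_eq_two_mul (abs_neg γ).le
      ((integrableOn_laguerreNormalized_mul hα (n / 2) (m / 2)).const_mul (2 / (2 * μ + 1))),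
    integral_const_mul, integral_laguerreNormalized_mul hα, mul_ite, mul_ite, mul_zero, mul_zero,
    Real.Gamma_add_one (by linarith)]
  · field_simp
  · intro x hx
    have hx0 : 0 < x := (abs_nonneg γ).trans_lt hx
    simp only [P_of_odd hn, P_of_odd hm, w, Real.sign_of_pos hx0, hweight x hx]
    field_simp
    rw [hsqrt]
    ring
  · intro x hx
    have hx0 : 0 < x := (abs_nonneg γ).trans_lt hx
    simp only [P_of_odd hn, P_of_odd hm, w, neg_sq, Real.sign_of_neg (neg_neg_of_pos hx0),
      hweight x hx]
    field_simp
    rw [hsqrt]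
    ring

lemma P_mul_P_mul_w_neg_of_even_of_odd {μ γ : ℝ} {n m : ℕ} (hn : n % 2 = 0) (hm : m % 2 = 1)
    (x : ℝ) :
    P μ γ n (-x) * P μ γ m (-x) * w μ γ (-x) = -(P μ γ n x * P μ γ m x * w μ γ x) := by
  simp only [P_of_even hn, P_of_odd hm, w, neg_sq, Real.sign_neg]
  ring

/-- orthogonality of the Specialized Chihara polynomials. -/
theorem chihara_orthogonality (μ γ : ℝ) (hμ : 0 < μ) (n m : ℕ) :
    ∫ x in Fset γ, P μ γ n x * P μ γ m x * w μ γ x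
      = if n = m then 2 * Real.Gamma (μ + 1/2) else 0 := by
  rcases Nat.mod_two_eq_zero_or_one n with hn | hn <;>
    rcases Nat.mod_two_eq_zero_or_one m with hm | hm
  · rw [setIntegral_P_mul_P_mul_w_of_even hμ hn hm]
    simp only [show n / 2 = m / 2 ↔ n = m by omega]
  · rw [if_neg (by omega)]
    exact setIntegral_Fset_eq_zero_of_odd (P_mul_P_mul_w_neg_of_even_of_odd hn hm)
  · rw [if_neg (by omega)]
    simp_rw [mul_comm (P μ γ n _)]
    exact setIntegral_Fset_eq_zero_of_odd (P_mul_P_mul_w_neg_of_even_of_odd hm hn)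
  · rw [setIntegral_P_mul_P_mul_w_of_odd hμ hn hm]
    simp only [show n / 2 = m / 2 ↔ n = m by omega]

end MinusOne
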